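/- For each fixed k ≥ 0, the probability that a uniformly random derangement of N elements has exactly k 2-cycles converges, as N → ∞, to (1/2)^k * e^{-1/2} / k!, i.e., the number of 2-cycles is asymptotically Poisson distributed with parameter 1/2. -/

import Mathlib

/-- Number of derangements of an `N`-element set. -/
noncomputable def numDerangementsOf (N : ℕ) : ℕ :=
  Nat.card {σ : Equiv.Perm (Fin N) // ∀ i, σ i ≠ i}

/-- Number of derangements of an `N`-element set having exactly `k` 2-cycles. -/
noncomputable def numDerangementsWithPairs (N k : ℕ) : ℕ :=
  Nat.card {σ : Equiv.Perm (Fin N) // (∀ i, σ i ≠ i) ∧ σ.cycleType.count 2 = k}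

/-!
Write `a n` for the proportion of permutations of `n` points with no cycle of length one or two.
Choosing the `k` transpositions first shows that a proportion `(1/2)^k / k! * a (N - 2k)` of the
permutations of `N` points are derangements with exactly `k` 2-cycles; summing over `k`, the
exponential generating function of derangements is `exp (x^2/2)` times that of `a`. Multiplying
by `exp (-x^2/2)` expresses `a n` as `∑ (-1/2)^j / j! * D_(n-2j) / (n-2j)!`, which tends to
`exp (-1/2) * exp (-1)` by dominated convergence since `D_n / n! → exp (-1)`. Dividing by
`D_N / N!` gives the Poisson limit.
-/

open Equiv Equiv.Perm Finset
open scoped Nat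

section TwoCycles

variable {α : Type*} [Fintype α] [DecidableEq α]

theorem card_support_cycleOf_eq_two_iff {σ : Perm α} {a : α} :
    #(σ.cycleOf a).support = 2 ↔ σ a ≠ a ∧ σ (σ a) = a := by
  constructor
  · intro h
    have ha : σ a ≠ a := fun ha => by simp [(cycleOf_eq_one_iff σ).2 ha] at h
    obtain ⟨x, y, -, hxy⟩ := card_support_eq_two.1 h
    refine ⟨ha, ?_⟩
    calc σ (σ a) = σ.cycleOf a (σ.cycleOf a a) := by simp
      _ = a := by rw [hxy, swap_apply_self]
  · rintro ⟨ha, haa⟩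
    have hc : σ.cycleOf a = swap a (σ a) := by
      rw [(isCycle_cycleOf σ ha).eq_swap_of_apply_apply_eq_self (x := a) (by simpa) (by simpa),
        cycleOf_apply_self]
    rw [hc, card_support_swap (Ne.symm ha)]

theorem card_filter_card_support_cycleOf_eq (σ : Perm α) {n : ℕ} (hn : n ≠ 0) :
    #{a | #(σ.cycleOf a).support = n} = n * σ.cycleType.count n := by
  have hmaps : ∀ a ∈ ({a | #(σ.cycleOf a).support = n} : Finset α),
      σ.cycleOf a ∈ σ.cycleFactorsFinset.filter (#·.support = n) := by
    intro a ha
    rw [mem_filter] at ha ⊢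
    refine ⟨cycleOf_mem_cycleFactorsFinset_iff.2 (mem_support.2 fun h => ?_), ha.2⟩
    simp [(cycleOf_eq_one_iff σ).2 h, Ne.symm hn] at ha
  rw [card_eq_sum_card_fiberwise hmaps, sum_const_nat (m := n), mul_comm]
  · rw [cycleType_def, Multiset.count_map, Finset.card_def, Finset.filter_val]
    congr 2
    exact Multiset.filter_congr fun c _ => eq_comm
  · intro c hc
    rw [mem_filter] at hc
    have hfiber : ({a ∈ {a | #(σ.cycleOf a).support = n} | σ.cycleOf a = c} : Finset α)
        = c.support := by
      ext a
      have hca := eq_cycleOf_of_mem_cycleFactorsFinset_iff σ c hc.1 a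
      simp only [mem_filter, mem_univ, true_and]
      constructor
      · exact fun h => hca.1 h.2.symm
      · intro h
        rw [← hca.2 h]
        exact ⟨hc.2, rfl⟩
    rw [hfiber, hc.2]

theorem card_filter_apply_ne_and_apply_apply_eq (σ : Perm α) :
    #{a | σ a ≠ a ∧ σ (σ a) = a} = 2 * σ.cycleType.count 2 := by
  simp_rw [← card_support_cycleOf_eq_two_iff]
  exact card_filter_card_support_cycleOf_eq σ two_ne_zero

theorem two_mul_count_two_cycleType_le (σ : Perm α) :
    2 * σ.cycleType.count 2 ≤ Fintype.card α :=
  card_filter_apply_ne_and_apply_apply_eq σ ▸ card_le_univ _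

end TwoCycles

section PairDerangements

variable {α β : Type*} [Fintype α] [DecidableEq α] [Fintype β] [DecidableEq β]

def derangementsWithPairs (α : Type*) [Fintype α] [DecidableEq α] (k : ℕ) : Finset (Perm α) :=
  {σ | (∀ i, σ i ≠ i) ∧ σ.cycleType.count 2 = k}

theorem mem_derangementsWithPairs {k : ℕ} {σ : Perm α} :
    σ ∈ derangementsWithPairs α k ↔ (∀ i, σ i ≠ i) ∧ σ.cycleType.count 2 = k := by
  simp [derangementsWithPairs]

theorem cycleType_permCongr (e : α ≃ β) (σ : Perm α) :
    (e.permCongr σ).cycleType = σ.cycleType := by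
  have h : e.permCongr σ
      = σ.extendDomain (e.trans (subtypeUnivEquiv fun _ => trivial).symm) := by
    ext x
    rw [extendDomain_apply_subtype _ _ trivial]
    simp [subtypeUnivEquiv]
  rw [h, cycleType_extendDomain]

theorem card_derangementsWithPairs_congr (e : α ≃ β) (k : ℕ) :
    #(derangementsWithPairs α k) = #(derangementsWithPairs β k) := by
  refine card_equiv e.permCongr fun σ => ?_
  simp only [mem_derangementsWithPairs, cycleType_permCongr, permCongr_apply, ne_eq]
  refine and_congr_left' ⟨fun h b => ?_, fun h a => by simpa using h (e a)⟩
  rw [← e.eq_symm_apply]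
  exact h _

theorem card_derangementsWithPairs_subtype (p : α → Prop) [DecidablePred p] (k : ℕ) :
    #(derangementsWithPairs (Subtype p) k)
      = #{τ : Perm α | (∀ x, τ x = x ↔ ¬p x) ∧ τ.cycleType.count 2 = k} := by
  set S : Finset (Perm α) := {τ | (∀ x, τ x = x ↔ ¬p x) ∧ τ.cycleType.count 2 = k}
  have hmoved : ∀ τ ∈ S, ∀ x, τ x ≠ x → p x := by
    intro τ hτ x hx
    by_contra hpx
    exact hx (((mem_filter.1 hτ).2.1 x).2 hpx)
  have hfix : ∀ τ ∈ S, ∀ x, p (τ x) ↔ p x := by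
    intro τ hτ x
    by_cases h : τ x = x
    · rw [h]
    · exact iff_of_true (hmoved τ hτ _ fun h' => h (τ.injective h')) (hmoved τ hτ x h)
  refine card_bij' (fun ρ _ => ofSubtype ρ) (fun τ hτ => τ.subtypePerm (hfix τ hτ))
    ?_ ?_ ?_ ?_
  · intro ρ hρ
    rw [mem_derangementsWithPairs] at hρ
    simp only [S, mem_filter, mem_univ, true_and, cycleType_ofSubtype, hρ.2, and_true]
    intro x
    by_cases hx : p x
    · simpa [ofSubtype_apply_of_mem ρ hx, hx, Subtype.ext_iff] using hρ.1 ⟨x, hx⟩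
    · simp [ofSubtype_apply_of_not_mem ρ hx, hx]
  · intro τ hτ
    rw [mem_derangementsWithPairs, ← cycleType_ofSubtype, ofSubtype_subtypePerm _ (hmoved τ hτ)]
    have hτ' := (mem_filter.1 hτ).2
    exact ⟨fun ⟨x, hx⟩ h => (hτ'.1 x).1 (congrArg Subtype.val h) hx, hτ'.2⟩
  · intro ρ _
    exact subtypePerm_ofSubtype ρ
  · intro τ hτ
    exact ofSubtype_subtypePerm _ (hmoved τ hτ)

theorem count_two_cycleType_mul_swap {τ : Perm α} {a b : α} (hab : a ≠ b) (ha : τ a = a)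
    (hb : τ b = b) : (τ * swap a b).cycleType.count 2 = τ.cycleType.count 2 + 1 := by
  have hdisj : Perm.Disjoint τ (swap a b) := by
    intro x
    by_cases hx : x = a ∨ x = b
    · rcases hx with rfl | rfl
      exacts [Or.inl ha, Or.inl hb]
    · push Not at hx
      exact Or.inr (swap_apply_of_ne_of_ne hx.1 hx.2)
  rw [hdisj.cycleType_mul, (isCycle_swap hab).cycleType, card_support_swap hab]
  simp

theorem card_filter_swapping_derangementsWithPairs {a b : α} (hab : a ≠ b) (k : ℕ) :
    #{σ ∈ derangementsWithPairs α (k + 1) | σ a = b ∧ σ b = a}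
      = #(derangementsWithPairs {x // x ≠ a ∧ x ≠ b} k) := by
  rw [card_derangementsWithPairs_subtype]
  refine card_nbij' (· * swap a b) (· * swap a b) ?_ ?_ ?_ ?_
  · intro σ hσ
    simp only [mem_coe, mem_filter, mem_derangementsWithPairs] at hσ
    obtain ⟨⟨hder, hk⟩, hσa, hσb⟩ := hσ
    have ha : (σ * swap a b) a = a := by simp [hσb]
    have hb : (σ * swap a b) b = b := by simp [hσa]
    simp only [mem_coe, mem_filter, mem_univ, true_and]
    refine ⟨fun x => ?_, ?_⟩
    · by_cases hx : x = a ∨ x = b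
      · rcases hx with rfl | rfl <;> simp [ha, hb]
      · push Not at hx
        simpa [swap_apply_of_ne_of_ne hx.1 hx.2, hx.1, hx.2] using hder x
    · have := count_two_cycleType_mul_swap hab ha hb
      rw [mul_assoc, swap_mul_self, mul_one, hk] at this
      omega
  · intro τ hτ
    simp only [mem_coe, mem_filter, mem_univ, true_and] at hτ
    obtain ⟨hfix, hk⟩ := hτ
    have ha : τ a = a := by simp [hfix]
    have hb : τ b = b := by simp [hfix]
    simp only [mem_coe, mem_filter, mem_derangementsWithPairs]
    refine ⟨⟨fun x => ?_, by rw [count_two_cycleType_mul_swap hab ha hb, hk]⟩, by simp [hb],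
      by simp [ha]⟩
    by_cases hx : x = a ∨ x = b
    · rcases hx with rfl | rfl <;> simp [ha, hb, hab, Ne.symm hab]
    · push Not at hx
      simpa [swap_apply_of_ne_of_ne hx.1 hx.2, hx.1, hx.2] using hfix x
  · intro σ _
    simp [mul_assoc]
  · intro τ _
    simp [mul_assoc]

theorem card_subtype_ne_and_ne {a b : α} (hab : a ≠ b) :
    Fintype.card {x // x ≠ a ∧ x ≠ b} = Fintype.card α - 2 := by
  have h : ({x | x ≠ a ∧ x ≠ b} : Finset α) = univ \ {a, b} := by
    ext x
    simp [not_or]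
  rw [Fintype.card_subtype, h, card_sdiff_of_subset (subset_univ _), card_univ,
    card_pair hab]

-- Double count the pairs `(σ, (a, b))` in which `σ` swaps `a ≠ b`: a derangement with `k + 1`
-- 2-cycles has `2 (k + 1)` of them, and removing the transposition `(a b)` from `σ` leaves a
-- derangement of the remaining points with `k` 2-cycles.
theorem card_derangementsWithPairs_succ_mul (k : ℕ) :
    #(derangementsWithPairs α (k + 1)) * (2 * (k + 1))
      = Fintype.card α * (Fintype.card α - 1)
          * #(derangementsWithPairs (Fin (Fintype.card α - 2)) k) := by
  rw [Nat.mul_sub_one, ← card_univ, ← offDiag_card]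
  refine card_mul_eq_card_mul (fun σ (p : α × α) => σ p.1 = p.2 ∧ σ p.2 = p.1) ?_ ?_
  · intro σ hσ
    rw [mem_derangementsWithPairs] at hσ
    rw [← hσ.2, ← card_filter_apply_ne_and_apply_apply_eq, bipartiteAbove]
    refine card_nbij' Prod.fst (fun a => (a, σ a)) ?_ ?_ ?_ ?_
    · rintro ⟨a, b⟩ h
      simp only [mem_coe, mem_filter, mem_offDiag, mem_univ, true_and] at h ⊢
      obtain ⟨hab, rfl, hba⟩ := h
      exact ⟨Ne.symm hab, hba⟩
    · intro a h
      simp only [mem_coe, mem_filter, mem_offDiag, mem_univ, true_and] at h ⊢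
      exact ⟨Ne.symm h.1, h.2⟩
    · rintro ⟨a, b⟩ h
      simp only [mem_coe, mem_filter] at h
      simp [h.2.1]
    · intro a _
      rfl
  · rintro ⟨a, b⟩ hab
    rw [bipartiteBelow, card_filter_swapping_derangementsWithPairs (mem_offDiag.1 hab).2.2]
    exact card_derangementsWithPairs_congr
      (Fintype.equivFinOfCardEq (card_subtype_ne_and_ne (mem_offDiag.1 hab).2.2)) k

theorem two_pow_mul_factorial_mul_card_derangementsWithPairs {k N : ℕ} (h : 2 * k ≤ N) :
    2 ^ k * k ! * #(derangementsWithPairs (Fin N) k)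
      = N.descFactorial (2 * k) * #(derangementsWithPairs (Fin (N - 2 * k)) 0) := by
  induction k generalizing N with
  | zero => simp
  | succ k ih =>
    obtain ⟨M, rfl⟩ : ∃ M, N = M + 2 := ⟨N - 2, by omega⟩
    have hrec := card_derangementsWithPairs_succ_mul (α := Fin (M + 2)) k
    rw [Fintype.card_fin, Nat.add_sub_cancel, Nat.add_succ_sub_one] at hrec
    have hdesc : (M + 2).descFactorial (2 * (k + 1))
        = (M + 2) * (M + 1) * M.descFactorial (2 * k) := by
      rw [show 2 * (k + 1) = 2 * k + 1 + 1 by ring, Nat.succ_descFactorial_succ,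
        Nat.succ_descFactorial_succ, mul_assoc]
    calc 2 ^ (k + 1) * (k + 1)! * #(derangementsWithPairs (Fin (M + 2)) (k + 1))
        = 2 ^ k * k ! * (#(derangementsWithPairs (Fin (M + 2)) (k + 1)) * (2 * (k + 1))) := by
          rw [Nat.factorial_succ]; ring
      _ = (M + 2) * (M + 1) * (2 ^ k * k ! * #(derangementsWithPairs (Fin M) k)) := by
          rw [hrec]; ring
      _ = _ := by
          rw [ih (by omega), hdesc, show M + 2 - 2 * (k + 1) = M - 2 * k by omega]; ring

theorem card_derangements_eq_sum_card_derangementsWithPairs :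
    Fintype.card (derangements α)
      = ∑ k ∈ range (Fintype.card α / 2 + 1), #(derangementsWithPairs α k) := by
  have hmaps : ∀ σ ∈ ({σ | ∀ i, σ i ≠ i} : Finset (Perm α)),
      σ.cycleType.count 2 ∈ range (Fintype.card α / 2 + 1) := fun σ _ =>
    mem_range.2 (by have := two_mul_count_two_cycleType_le σ; omega)
  rw [show Fintype.card (derangements α) = #({σ | ∀ i, σ i ≠ i} : Finset (Perm α)) from
    Fintype.card_subtype _, card_eq_sum_card_fiberwise hmaps]
  refine sum_congr rfl fun k _ => ?_
  rw [filter_filter]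
  rfl

end PairDerangements

namespace PowerSeries

theorem coeff_expand_mul_eq_sum {R : Type*} [CommRing R] (p : ℕ) (hp : p ≠ 0) (f g : R⟦X⟧)
    (m : ℕ) :
    coeff m (expand p hp f * g) = ∑ k ∈ range (m / p + 1), coeff k f * coeff (m - p * k) g := by
  have hsupp : ({i ∈ range (m + 1) | p ∣ i} : Finset ℕ)
      = (range (m / p + 1)).map ⟨(p * ·), mul_right_injective₀ hp⟩ := by
    ext i
    simp only [mem_filter, mem_range, mem_map, Function.Embedding.coeFn_mk, Nat.lt_succ_iff]
    constructor
    · rintro ⟨hi, k, rfl⟩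
      exact ⟨k, (Nat.le_div_iff_mul_le (Nat.pos_of_ne_zero hp)).2 (by linarith), rfl⟩
    · rintro ⟨k, hk, rfl⟩
      exact ⟨(Nat.mul_le_mul_left p hk).trans (Nat.mul_div_le m p), dvd_mul_right p k⟩
  rw [coeff_mul, Nat.sum_antidiagonal_eq_sum_range_succ_mk]
  simp only [coeff_expand, ite_mul, zero_mul]
  rw [← sum_filter, hsupp, sum_map]
  simp [Nat.mul_div_cancel_left _ (Nat.pos_of_ne_zero hp)]

theorem rescale_neg_exp_mul_rescale_exp {A : Type*} [CommRing A] [Algebra ℚ A] (t : A) :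
    rescale (-t) (exp A) * rescale t (exp A) = 1 := by
  rw [exp_mul_exp_eq_exp_add, neg_add_cancel, rescale_zero_apply, constantCoeff_exp, map_one]

end PowerSeries

-- In power series the hypothesis reads `mk g = exp (t X ^ p) * mk f`.
open PowerSeries in
theorem eq_sum_neg_pow_div_factorial_of_eq_sum_pow_div_factorial {K : Type*} [Field K]
    [CharZero K] {p : ℕ} (hp : p ≠ 0) {t : K} {f g : ℕ → K}
    (h : ∀ m, g m = ∑ k ∈ range (m / p + 1), t ^ k / k ! * f (m - p * k)) (m : ℕ) :
    f m = ∑ k ∈ range (m / p + 1), (-t) ^ k / k ! * g (m - p * k) := by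
  have hcoeff : ∀ (s : K) (u : ℕ → K) (n : ℕ),
      ∑ k ∈ range (n / p + 1), s ^ k / k ! * u (n - p * k)
        = coeff n (expand p hp (rescale s (exp K)) * mk u) := by
    intro s u n
    simp [coeff_expand_mul_eq_sum, coeff_rescale, coeff_exp, div_eq_mul_inv]
  have hg : mk g = expand p hp (rescale t (exp K)) * mk f := by
    ext n
    rw [coeff_mk, h, hcoeff]
  rw [hcoeff, hg, ← mul_assoc, ← map_mul, rescale_neg_exp_mul_rescale_exp, map_one, one_mul,
    coeff_mk]

open Filter Topology in
theorem tendsto_sum_range_div_mul {p : ℕ} (hp : p ≠ 0) {u v : ℕ → ℝ} {L : ℝ}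
    (hu : Summable u) (hv : Tendsto v atTop (𝓝 L)) :
    Tendsto (fun m => ∑ k ∈ range (m / p + 1), u k * v (m - p * k)) atTop
      (𝓝 ((∑' k, u k) * L)) := by
  obtain ⟨C, hC⟩ : ∃ C, ∀ n, |v n| ≤ C := by
    obtain ⟨C, hC⟩ := isBounded_iff_forall_norm_le.1 (Metric.isBounded_range_of_tendsto v hv)
    exact ⟨C, fun n => hC _ (Set.mem_range_self n)⟩
  set F : ℕ → ℕ → ℝ := fun m k => if k ≤ m / p then u k * v (m - p * k) else 0
  have hF : ∀ m, ∑ k ∈ range (m / p + 1), u k * v (m - p * k) = ∑' k, F m k := by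
    intro m
    rw [tsum_eq_sum (s := range (m / p + 1)) fun k hk => if_neg (by simpa using hk)]
    exact sum_congr rfl fun k hk => (if_pos (Nat.lt_succ_iff.1 (mem_range.1 hk))).symm
  simp_rw [hF, ← tsum_mul_right]
  refine tendsto_tsum_of_dominated_convergence (hu.abs.mul_right C) (fun k => ?_) ?_
  · refine ((hv.comp (tendsto_sub_atTop_nat (p * k))).const_mul (u k)).congr' ?_
    filter_upwards [eventually_ge_atTop (p * k)] with m hm
    exact (if_pos ((Nat.le_div_iff_mul_le (Nat.pos_of_ne_zero hp)).2 (by linarith))).symm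
  · refine Eventually.of_forall fun m k => ?_
    simp only [F]
    split_ifs
    · rw [Real.norm_eq_abs, abs_mul]
      exact mul_le_mul_of_nonneg_left (hC _) (abs_nonneg _)
    · simpa using mul_nonneg (abs_nonneg (u k)) ((abs_nonneg _).trans (hC 0))

theorem card_derangementsWithPairs_div_factorial {k N : ℕ} (h : 2 * k ≤ N) :
    (#(derangementsWithPairs (Fin N) k) : ℝ) / N !
      = (1 / 2 : ℝ) ^ k / k !
          * ((#(derangementsWithPairs (Fin (N - 2 * k)) 0) : ℝ) / (N - 2 * k)!) := by
  have hclosed : (2 : ℝ) ^ k * k ! * #(derangementsWithPairs (Fin N) k)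
      = N.descFactorial (2 * k) * #(derangementsWithPairs (Fin (N - 2 * k)) 0) := by
    exact_mod_cast two_pow_mul_factorial_mul_card_derangementsWithPairs h
  have hfac : ((N - 2 * k)! : ℝ) * N.descFactorial (2 * k) = N ! := by
    exact_mod_cast Nat.factorial_mul_descFactorial h
  have hdesc : (N.descFactorial (2 * k) : ℝ) ≠ 0 := by
    exact_mod_cast (Nat.descFactorial_pos.2 h).ne'
  rw [one_div_pow, ← hfac]
  field_simp
  linear_combination hclosed

theorem numDerangements_div_factorial_eq_sum (m : ℕ) :
    (numDerangements m : ℝ) / m !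
      = ∑ k ∈ range (m / 2 + 1), (1 / 2 : ℝ) ^ k / k !
          * ((#(derangementsWithPairs (Fin (m - 2 * k)) 0) : ℝ) / (m - 2 * k)!) := by
  rw [← card_derangements_fin_eq_numDerangements,
    card_derangements_eq_sum_card_derangementsWithPairs, Fintype.card_fin, Nat.cast_sum, sum_div]
  exact sum_congr rfl fun k hk =>
    card_derangementsWithPairs_div_factorial (by have := mem_range.1 hk; omega)

open Filter Topology in
theorem tendsto_card_derangementsWithPairs_zero_div_factorial :
    Tendsto (fun m => (#(derangementsWithPairs (Fin m) 0) : ℝ) / m !) atTop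
      (𝓝 (Real.exp (-(1 / 2)) * Real.exp (-1))) := by
  have hexp : HasSum (fun k => (-(1 / 2) : ℝ) ^ k / k !) (Real.exp (-(1 / 2))) := by
    rw [Real.exp_eq_exp_ℝ]
    exact NormedSpace.expSeries_div_hasSum_exp _
  rw [← hexp.tsum_eq]
  refine (tendsto_sum_range_div_mul two_ne_zero hexp.summable numDerangements_tendsto_inv_e).congr
    fun m => ?_
  exact (eq_sum_neg_pow_div_factorial_of_eq_sum_pow_div_factorial two_ne_zero
    (f := fun n => (#(derangementsWithPairs (Fin n) 0) : ℝ) / n !)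
    numDerangements_div_factorial_eq_sum m).symm

theorem numDerangementsWithPairs_eq_card (N k : ℕ) :
    numDerangementsWithPairs N k = #(derangementsWithPairs (Fin N) k) := by
  rw [numDerangementsWithPairs, derangementsWithPairs, ← Fintype.card_subtype,
    Nat.card_eq_fintype_card]

theorem numDerangementsOf_eq_numDerangements (N : ℕ) :
    numDerangementsOf N = numDerangements N := by
  rw [numDerangementsOf, ← card_derangements_fin_eq_numDerangements, ← Nat.card_eq_fintype_card]
  rfl

theorem prob_exactly_k_pairs_tendsto (k : ℕ) :
    Filter.Tendsto
      (fun N : ℕ =>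
        (numDerangementsWithPairs N k : ℝ) / (numDerangementsOf N : ℝ))
      Filter.atTop
      (nhds ((1 / 2) ^ k * Real.exp (-(1 / 2)) / Nat.factorial k)) := by
  have hnum := (tendsto_card_derangementsWithPairs_zero_div_factorial.comp
    (Filter.tendsto_sub_atTop_nat (2 * k))).const_mul ((1 / 2 : ℝ) ^ k / k !)
  have hratio := hnum.div numDerangements_tendsto_inv_e (Real.exp_ne_zero _)
  have hlimit : (1 / 2 : ℝ) ^ k / k ! * (Real.exp (-(1 / 2)) * Real.exp (-1)) / Real.exp (-1)
      = (1 / 2) ^ k * Real.exp (-(1 / 2)) / k ! := by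
    field_simp
  rw [← hlimit]
  refine hratio.congr' ?_
  filter_upwards [Filter.eventually_ge_atTop (2 * k)] with N hN
  rw [Pi.div_apply, Function.comp_apply, ← card_derangementsWithPairs_div_factorial hN,
    div_div_div_cancel_right₀ (by positivity), numDerangementsWithPairs_eq_card,
    numDerangementsOf_eq_numDerangements]
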